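/- Fix real numbers 0 ≤ λ1 < λ2 < 1. For all Φ1, Φ2, θ ∈ ℝ, all β0, β1 ∈ 𝔻, and every positive integer t, writing E_j = E_{Φ_j,θ,β0,β1}, one has ‖E_1^t δ_0 − E_2^t δ_0‖ ≤ 2π·λ2·|Φ1 − Φ2|·Σ_{s=0}^{t−1} ‖X E_2^s δ_0‖. -/

import Mathlib

open scoped ENNReal ComplexConjugate Classical
open Filter MeasureTheory

noncomputable section

abbrev l2Z : Type := lp (fun _ : ℤ => ℂ) 2

/-- The standard basis vector `δ_n` of `ℓ²(ℤ)`. -/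
def deltaVec (n : ℤ) : l2Z := lp.single 2 n 1

/-- Membership in the domain of the position operator `X`. -/
def InDomX (ψ : l2Z) : Prop := Memℓp (fun n : ℤ => (n : ℂ) * ψ n) 2

/-- The position operator `X`, defined (with junk value `0` off its domain). -/
def posX (ψ : l2Z) : l2Z :=
  if h : InDomX ψ then (⟨fun n : ℤ => (n : ℂ) * ψ n, h⟩ : l2Z) else 0

/-- `‖X ψ‖²`, computed as an extended real (possibly `+∞`). -/
def XnormSq (ψ : l2Z) : ℝ≥0∞ := ∑' n : ℤ, ENNReal.ofReal ((n : ℝ) ^ 2 * ‖ψ n‖ ^ 2)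

/-- `ρ_n = √(1 - |α_n|²)`. -/
def cmvRho (α : ℤ → ℂ) (n : ℤ) : ℝ := Real.sqrt (1 - ‖α n‖ ^ 2)

/-- The pointwise action of `M = ⊕ₙ Θ(α_{2n+1})` (blocks acting on the pairs
`{2n+1, 2n+2}`): a block `Θ(α_j)` acts on `span{δ_j, δ_{j+1}}` by the matrix
`[[conj α_j, ρ_j], [ρ_j, -α_j]]`. -/
def cmvMApply (α : ℤ → ℂ) (ψ : ℤ → ℂ) : ℤ → ℂ := fun n =>
  if Odd n then conj (α n) * ψ n + (cmvRho α n : ℂ) * ψ (n + 1)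
  else (cmvRho α (n - 1) : ℂ) * ψ (n - 1) - α (n - 1) * ψ n

/-- The pointwise action of `L = ⊕ₙ Θ(α_{2n})` (blocks acting on the pairs `{2n, 2n+1}`). -/
def cmvLApply (α : ℤ → ℂ) (ψ : ℤ → ℂ) : ℤ → ℂ := fun n =>
  if Even n then conj (α n) * ψ n + (cmvRho α n : ℂ) * ψ (n + 1)
  else (cmvRho α (n - 1) : ℂ) * ψ (n - 1) - α (n - 1) * ψ n

/-- `E` is the extended CMV matrix with Verblunsky coefficients `α`: a unitary operator on
`ℓ²(ℤ)` acting pointwise as `E = L M`. -/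
def IsECMV (α : ℤ → ℂ) (E : l2Z →L[ℂ] l2Z) : Prop :=
  E ∈ unitary (l2Z →L[ℂ] l2Z) ∧
    ∀ ψ : l2Z, ∀ n : ℤ, (E ψ) n = cmvLApply α (cmvMApply α (fun m => ψ m)) n

/-- The Verblunsky coefficients of the (locally perturbed) unitary almost-Mathieu operator:
`α₀ = β₀`, `α₁ = β₁`, `α_{2n-1} = λ₂ sin(2π(nΦ+θ))` for `n ≠ 1`, and `α_{2n} = √(1-λ₁²)`
for `n ≠ 0`. -/
def uamoAlpha (lam1 lam2 Phi theta : ℝ) (beta0 beta1 : ℂ) : ℤ → ℂ := fun n =>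
  if n = 0 then beta0
  else if n = 1 then beta1
  else if Odd n then
    ((lam2 * Real.sin (2 * Real.pi * ((((n + 1) / 2 : ℤ) : ℝ) * Phi + theta)) : ℝ) : ℂ)
  else ((Real.sqrt (1 - lam1 ^ 2) : ℝ) : ℂ)

/-!
Since the even Verblunsky coefficients do not depend on `Φ`, `E₁ - E₂ = L (M₁ - M₂)` with `L`
unitary. On the block `{2k+1, 2k+2}`, `M₁ - M₂` is the matrix `[[conj d, r], [r, -d]]` with
`d = Δα_{2k+1}`, `r = Δρ_{2k+1}`, whose norm is `√(|d|² + r²)`; as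
`u ↦ (λ₂ sin u, √(1 - λ₂² sin² u))` is `λ₂`-Lipschitz, this is at most
`2πλ₂|k+1||Φ₁ - Φ₂|`, and `|k+1|` is at most the position on that block. Hence
`‖(E₁ - E₂)ψ‖ ≤ 2πλ₂|Φ₁ - Φ₂|‖Xψ‖`, and the theorem follows by telescoping
`E₁ᵗ - E₂ᵗ = ∑ₛ E₁ᵗ⁻¹⁻ˢ (E₁ - E₂) E₂ˢ` with `E₁` unitary.
-/

open Function

section Pairs

variable {M : Type*} [AddCommMonoid M]

def pairSum (g : ℤ → M) (c k : ℤ) : M := g (2 * k + c) + g (2 * k + c + 1)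

theorem hasSum_pairSum_iff {g : ℤ → ℝ} (hg : 0 ≤ g) (c : ℤ) {a : ℝ} :
    HasSum (pairSum g c) a ↔ HasSum g a := by
  let e : ℤ × Fin 2 ≃ ℤ := (Int.divModEquiv 2).symm.trans (Equiv.addRight c)
  have hfiber : ∀ k, HasSum (fun i => g (e (k, i))) (pairSum g c k) := by
    intro k
    convert hasSum_fintype (fun i : Fin 2 => g (e (k, i)))
    simp [e, pairSum, Fin.sum_univ_two, mul_comm, add_right_comm]
  refine ⟨fun h => ?_, fun h => (e.hasSum_iff.2 h).prod_fiberwise hfiber⟩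
  have hsum : Summable (g ∘ e) :=
    (summable_prod_of_nonneg fun _ => hg _).2
      ⟨fun k => (hfiber k).summable, by simpa only [(hfiber _).tsum_eq] using h.summable⟩
  rw [h.unique (hsum.hasSum.prod_fiberwise hfiber), ← e.hasSum_iff]
  exact hsum.hasSum

end Pairs

theorem lp.hasSum_norm_sq {α : Type*} {E : α → Type*} [∀ i, NormedAddCommGroup (E i)]
    (f : lp E 2) : HasSum (fun i => ‖f i‖ ^ 2) (‖f‖ ^ 2) := by
  simpa using lp.hasSum_norm (p := 2) (by norm_num) f

theorem norm_pow_apply_sub_pow_apply_le_sum {R V : Type*} [Semiring R]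
    [SeminormedAddCommGroup V] [Module R V] (A B : V →L[R] V) (hA : ∀ x, ‖A x‖ ≤ ‖x‖)
    (v : V) (t : ℕ) :
    ‖(A ^ t) v - (B ^ t) v‖ ≤ ∑ s ∈ Finset.range t, ‖A ((B ^ s) v) - B ((B ^ s) v)‖ := by
  induction t with
  | zero => simp
  | succ t ih =>
    have hsplit : (A ^ (t + 1)) v - (B ^ (t + 1)) v
        = A ((A ^ t) v - (B ^ t) v) + (A ((B ^ t) v) - B ((B ^ t) v)) := by
      rw [pow_succ', pow_succ', mul_apply_eq_comp, mul_apply_eq_comp, map_sub]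
      abel
    rw [hsplit, Finset.sum_range_succ]
    exact (norm_add_le _ _).trans (add_le_add_left ((hA _).trans ih) _)

theorem norm_sq_add_norm_sq_of_verblunsky_block (d : ℂ) (r : ℝ) (x y : ℂ) :
    ‖conj d * x + r * y‖ ^ 2 + ‖r * x - d * y‖ ^ 2
      = (‖d‖ ^ 2 + r ^ 2) * (‖x‖ ^ 2 + ‖y‖ ^ 2) := by
  simp only [Complex.sq_norm, Complex.normSq_apply, Complex.add_re, Complex.add_im,
    Complex.sub_re, Complex.sub_im, Complex.mul_re, Complex.mul_im, Complex.conj_re,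
    Complex.conj_im, Complex.ofReal_re, Complex.ofReal_im]
  ring

open Real in
theorem sq_sub_add_sq_sqrt_sub_le {lam : ℝ} (h0 : 0 ≤ lam) (h1 : lam < 1) (x y : ℝ) :
    (lam * sin x - lam * sin y) ^ 2
        + (√(1 - (lam * sin x) ^ 2) - √(1 - (lam * sin y) ^ 2)) ^ 2
      ≤ lam ^ 2 * (x - y) ^ 2 := by
  -- `u ↦ (λ sin u, √(1 - λ² sin² u))` is a curve in `ℂ ≅ ℝ²` with speed at most `λ`.
  set q : ℝ → ℝ := fun u => 1 - (lam * sin u) ^ 2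
  have hq : ∀ u, 0 < q u := fun u => by
    nlinarith [sin_sq_le_one u, mul_pow lam (sin u) 2]
  let γ : ℝ → ℂ := fun u => (lam * sin u : ℝ) + (√(q u) : ℝ) * Complex.I
  let γ' : ℝ → ℂ := fun u =>
    (lam * cos u : ℝ) + (-(lam * sin u) * (lam * cos u) / √(q u) : ℝ) * Complex.I
  have hderiv : ∀ u, HasDerivAt γ (γ' u) u := by
    intro u
    have hs : HasDerivAt (fun v => lam * sin v) (lam * cos u) u :=
      (hasDerivAt_sin u).const_mul lam
    have hr : HasDerivAt (fun v => √(q v)) (-(lam * sin u) * (lam * cos u) / √(q u)) u := by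
      refine (((hs.pow 2).const_sub 1).sqrt (hq u).ne').congr_deriv ?_
      simp only [q, Pi.pow_apply, Nat.cast_ofNat]
      ring
    exact hs.ofReal_comp.add (hr.ofReal_comp.mul_const Complex.I)
  have hspeed : ∀ u, ‖γ' u‖ ≤ lam := by
    intro u
    have hsq : ‖γ' u‖ ^ 2 ≤ lam ^ 2 := by
      have hqu := hq u
      have hfrac :
          (-(lam * sin u) * (lam * cos u)) ^ 2 / q u ≤ lam ^ 2 - (lam * cos u) ^ 2 := by
        rw [div_le_iff₀ hqu]
        simp only [q]
        nlinarith [sin_sq_add_cos_sq u,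
          mul_nonneg (sq_nonneg (lam * sin u)) (sub_nonneg.2 (pow_le_one₀ (n := 2) h0 h1.le))]
      rw [Complex.sq_norm, Complex.normSq_add_mul_I, div_pow, sq_sqrt hqu.le]
      linarith
    exact pow_le_pow_iff_left₀ (norm_nonneg _) h0 two_ne_zero |>.1 hsq
  have hlip : ‖γ x - γ y‖ ≤ lam * ‖x - y‖ :=
    convex_univ.norm_image_sub_le_of_norm_hasDerivWithin_le
      (fun u _ => (hderiv u).hasDerivWithinAt) (fun u _ => hspeed u) (Set.mem_univ y)
      (Set.mem_univ x)
  have hγ : γ x - γ y = ((lam * sin x - lam * sin y : ℝ) : ℂ)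
      + ((√(q x) - √(q y) : ℝ) : ℂ) * Complex.I := by
    simp only [γ, Complex.ofReal_sub]
    ring
  calc _ = ‖γ x - γ y‖ ^ 2 := by rw [hγ, Complex.sq_norm, Complex.normSq_add_mul_I]
    _ ≤ (lam * ‖x - y‖) ^ 2 := pow_le_pow_left₀ (norm_nonneg _) hlip 2
    _ = lam ^ 2 * (x - y) ^ 2 := by rw [mul_pow, Real.norm_eq_abs, sq_abs]

section CMV

variable (α β : ℤ → ℂ) (f g : ℤ → ℂ) (k : ℤ)

theorem cmvLApply_two_mul :
    cmvLApply α f (2 * k)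
      = conj (α (2 * k)) * f (2 * k) + cmvRho α (2 * k) * f (2 * k + 1) := by
  simp [cmvLApply]

theorem cmvLApply_two_mul_add_one :
    cmvLApply α f (2 * k + 1) = cmvRho α (2 * k) * f (2 * k) - α (2 * k) * f (2 * k + 1) := by
  simp [cmvLApply]

theorem cmvMApply_two_mul_add_one :
    cmvMApply α f (2 * k + 1)
      = conj (α (2 * k + 1)) * f (2 * k + 1) + cmvRho α (2 * k + 1) * f (2 * k + 2) := by
  simp [cmvMApply, add_assoc]

theorem cmvMApply_two_mul_add_two :
    cmvMApply α f (2 * k + 2)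
      = cmvRho α (2 * k + 1) * f (2 * k + 1) - α (2 * k + 1) * f (2 * k + 2) := by
  have : ¬ Odd (2 * k + 2) := by rw [Int.not_odd_iff_even]; exact ⟨k + 1, by ring⟩
  simp [cmvMApply, this, show 2 * k + 2 - 1 = 2 * k + 1 by ring]

theorem cmvLApply_sub (n : ℤ) :
    cmvLApply α f n - cmvLApply α g n = cmvLApply α (f - g) n := by
  obtain ⟨k, rfl | rfl⟩ := Int.even_or_odd' n
  · simp only [cmvLApply_two_mul, Pi.sub_apply]; ring
  · simp only [cmvLApply_two_mul_add_one, Pi.sub_apply]; ring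

variable {α β} in
theorem cmvLApply_congr (h : ∀ k, α (2 * k) = β (2 * k)) : cmvLApply α = cmvLApply β := by
  have hρ : ∀ k, cmvRho α (2 * k) = cmvRho β (2 * k) := fun k => by simp only [cmvRho, h]
  ext f n
  obtain ⟨k, rfl | rfl⟩ := Int.even_or_odd' n
  · simp only [cmvLApply_two_mul, h, hρ]
  · simp only [cmvLApply_two_mul_add_one, h, hρ]

theorem cmvRho_sq {n : ℤ} (h : ‖α n‖ ≤ 1) : cmvRho α n ^ 2 = 1 - ‖α n‖ ^ 2 :=
  Real.sq_sqrt (by nlinarith [norm_nonneg (α n)])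

theorem pairSum_norm_sq_cmvLApply (h : ‖α (2 * k)‖ ≤ 1) :
    pairSum (fun n => ‖cmvLApply α f n‖ ^ 2) 0 k = pairSum (fun n => ‖f n‖ ^ 2) 0 k := by
  simp only [pairSum, add_zero, cmvLApply_two_mul, cmvLApply_two_mul_add_one,
    norm_sq_add_norm_sq_of_verblunsky_block, cmvRho_sq α h]
  ring

theorem pairSum_norm_sq_cmvMApply_sub :
    pairSum (fun n => ‖cmvMApply α f n - cmvMApply β f n‖ ^ 2) 1 k
      = (‖α (2 * k + 1) - β (2 * k + 1)‖ ^ 2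
          + (cmvRho α (2 * k + 1) - cmvRho β (2 * k + 1)) ^ 2)
        * pairSum (fun n => ‖f n‖ ^ 2) 1 k := by
  rw [pairSum, pairSum, show 2 * k + 1 + 1 = 2 * k + 2 by ring, cmvMApply_two_mul_add_one,
    cmvMApply_two_mul_add_one, cmvMApply_two_mul_add_two, cmvMApply_two_mul_add_two,
    ← norm_sq_add_norm_sq_of_verblunsky_block, map_sub, Complex.ofReal_sub]
  congr 3 <;> ring

theorem finite_support_of_nearest_neighbour {f g : ℤ → ℂ} (hf : (support f).Finite)
    (h : ∀ n, f (n - 1) = 0 → f n = 0 → f (n + 1) = 0 → g n = 0) : (support g).Finite := by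
  refine ((hf.preimage (add_left_injective (-1)).injOn).union
    (hf.union (hf.preimage (add_left_injective 1).injOn))).subset fun n hn => ?_
  by_contra hnot
  simp only [Set.mem_union, Set.mem_preimage, mem_support, not_or, not_not] at hnot
  exact hn (h n (by simpa [sub_eq_add_neg] using hnot.1) hnot.2.1 hnot.2.2)

theorem finite_support_cmvMApply (hf : (support f).Finite) : (support (cmvMApply α f)).Finite :=
  finite_support_of_nearest_neighbour hf fun n h₁ h₂ h₃ => by
    unfold cmvMApply; split_ifs <;> simp [h₁, h₂, h₃]

theorem finite_support_cmvLApply (hf : (support f).Finite) : (support (cmvLApply α f)).Finite :=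
  finite_support_of_nearest_neighbour hf fun n h₁ h₂ h₃ => by
    unfold cmvLApply; split_ifs <;> simp [h₁, h₂, h₃]

end CMV

theorem finite_support_deltaVec (n : ℤ) : (support ⇑(deltaVec n)).Finite :=
  (Set.finite_singleton n).subset <|
    support_subset_iff'.2 fun _ hm => lp.single_apply_ne 2 n _ hm

theorem inDomX_of_finite_support {ψ : l2Z} (hψ : (support ⇑ψ).Finite) : InDomX ψ :=
  (memℓp_zero (f := fun n : ℤ => (n : ℂ) * ψ n)
    (hψ.subset (support_mul_subset_right _ _))).of_exponent_ge zero_le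

theorem posX_apply {ψ : l2Z} (hψ : InDomX ψ) (n : ℤ) : posX ψ n = n * ψ n := by
  rw [posX, dif_pos hψ]

theorem norm_sq_posX_apply {ψ : l2Z} (hψ : InDomX ψ) (n : ℤ) :
    ‖posX ψ n‖ ^ 2 = (n : ℝ) ^ 2 * ‖ψ n‖ ^ 2 := by
  rw [posX_apply hψ, norm_mul, mul_pow, Complex.norm_intCast, sq_abs]

namespace IsECMV

variable {α : ℤ → ℂ} {E : l2Z →L[ℂ] l2Z}

theorem finite_support_apply (hE : IsECMV α E) {ψ : l2Z} (hψ : (support ⇑ψ).Finite) :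
    (support ⇑(E ψ)).Finite := by
  have : ⇑(E ψ) = cmvLApply α (cmvMApply α ψ) := funext (hE.2 ψ)
  rw [this]
  exact finite_support_cmvLApply _ _ (finite_support_cmvMApply _ _ hψ)

theorem finite_support_pow_apply (hE : IsECMV α E) {ψ : l2Z} (hψ : (support ⇑ψ).Finite)
    (s : ℕ) : (support ⇑((E ^ s) ψ)).Finite := by
  induction s with
  | zero => simpa using hψ
  | succ s ih => rw [pow_succ', mul_apply_eq_comp]; exact hE.finite_support_apply ih

end IsECMV

theorem pairSum_norm_sq_cmvMApply_sub_le {α β : ℤ → ℂ} {ψ : l2Z} (hψ : InDomX ψ) {k : ℤ}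
    {C : ℝ} (hodd : ‖α (2 * k + 1) - β (2 * k + 1)‖ ^ 2
      + (cmvRho α (2 * k + 1) - cmvRho β (2 * k + 1)) ^ 2 ≤ C ^ 2 * ((k : ℝ) + 1) ^ 2) :
    pairSum (fun n => ‖cmvMApply α ψ n - cmvMApply β ψ n‖ ^ 2) 1 k
      ≤ C ^ 2 * pairSum (fun n => ‖posX ψ n‖ ^ 2) 1 k := by
  have h₁ : ((k : ℝ) + 1) ^ 2 ≤ ((2 * k + 1 : ℤ) : ℝ) ^ 2 := by
    have : (k + 1) ^ 2 ≤ (2 * k + 1) ^ 2 := by rcases le_or_gt 0 k with hk | hk <;> nlinarith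
    exact_mod_cast this
  have h₂ : ((k : ℝ) + 1) ^ 2 ≤ ((2 * k + 1 + 1 : ℤ) : ℝ) ^ 2 := by
    push_cast; nlinarith [sq_nonneg ((k : ℝ) + 1)]
  rw [pairSum_norm_sq_cmvMApply_sub, pairSum, pairSum, norm_sq_posX_apply hψ,
    norm_sq_posX_apply hψ]
  calc _ ≤ C ^ 2 * ((k : ℝ) + 1) ^ 2 * (‖ψ (2 * k + 1)‖ ^ 2 + ‖ψ (2 * k + 1 + 1)‖ ^ 2) :=
        by gcongr
    _ ≤ _ := by
      rw [mul_assoc]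
      gcongr
      nlinarith [mul_le_mul_of_nonneg_right h₁ (sq_nonneg ‖ψ (2 * k + 1)‖),
        mul_le_mul_of_nonneg_right h₂ (sq_nonneg ‖ψ (2 * k + 1 + 1)‖)]

theorem IsECMV.norm_apply_sub_apply_le {α β : ℤ → ℂ} {E F : l2Z →L[ℂ] l2Z} (hE : IsECMV α E)
    (hF : IsECMV β F) (heven : ∀ k, α (2 * k) = β (2 * k)) (hβ : ∀ k, ‖β (2 * k)‖ ≤ 1)
    {C : ℝ} (hC : 0 ≤ C)
    (hodd : ∀ k : ℤ, ‖α (2 * k + 1) - β (2 * k + 1)‖ ^ 2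
      + (cmvRho α (2 * k + 1) - cmvRho β (2 * k + 1)) ^ 2 ≤ C ^ 2 * ((k : ℝ) + 1) ^ 2)
    {ψ : l2Z} (hψ : InDomX ψ) : ‖E ψ - F ψ‖ ≤ C * ‖posX ψ‖ := by
  set φ : ℤ → ℂ := fun n => cmvMApply α ψ n - cmvMApply β ψ n
  have hsub : ∀ n, (E ψ - F ψ) n = cmvLApply β φ n := fun n => by
    rw [lp.coeFn_sub, Pi.sub_apply, hE.2, hF.2, cmvLApply_congr heven, cmvLApply_sub]; rfl
  have hX := (hasSum_pairSum_iff (fun _ => sq_nonneg _) 1).2 (lp.hasSum_norm_sq (posX ψ))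
  have hφX : ∀ k, pairSum (fun n => ‖φ n‖ ^ 2) 1 k
      ≤ C ^ 2 * pairSum (fun n => ‖posX ψ n‖ ^ 2) 1 k :=
    fun k => pairSum_norm_sq_cmvMApply_sub_le hψ (hodd k)
  have hφ_nonneg : 0 ≤ fun n => ‖φ n‖ ^ 2 := fun _ => sq_nonneg _
  have hφ_pairs : Summable (pairSum (fun n => ‖φ n‖ ^ 2) 1) :=
    .of_nonneg_of_le (fun k => add_nonneg (sq_nonneg _) (sq_nonneg _)) hφX (hX.mul_left _).summable
  obtain ⟨S, hS⟩ : Summable fun n => ‖φ n‖ ^ 2 :=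
    ((hasSum_pairSum_iff hφ_nonneg 1).1 hφ_pairs.hasSum).summable
  have hSX : S ≤ C ^ 2 * ‖posX ψ‖ ^ 2 :=
    hasSum_le hφX ((hasSum_pairSum_iff hφ_nonneg 1).2 hS) (hX.mul_left _)
  have hES : HasSum (fun n => ‖(E ψ - F ψ) n‖ ^ 2) S := by
    refine (hasSum_pairSum_iff (fun _ => sq_nonneg _) 0).1 ?_
    convert (hasSum_pairSum_iff hφ_nonneg 0).2 hS using 1
    ext k
    simp only [hsub]
    exact pairSum_norm_sq_cmvLApply β φ k (hβ k)
  have hsq : ‖E ψ - F ψ‖ ^ 2 ≤ (C * ‖posX ψ‖) ^ 2 := by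
    rw [(lp.hasSum_norm_sq _).unique hES, mul_pow]
    exact hSX
  exact (pow_le_pow_iff_left₀ (norm_nonneg _) (by positivity) two_ne_zero).1 hsq

section UAMO

variable {lam1 lam2 Phi Phi' theta : ℝ} {beta0 beta1 : ℂ}

theorem uamoAlpha_two_mul {k : ℤ} (hk : k ≠ 0) :
    uamoAlpha lam1 lam2 Phi theta beta0 beta1 (2 * k) = ((√(1 - lam1 ^ 2) : ℝ) : ℂ) := by
  have h1 : 2 * k ≠ 1 := by omega
  have hodd : ¬ Odd (2 * k) := Int.not_odd_iff_even.2 (even_two_mul k)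
  simp [uamoAlpha, hk, h1, hodd]

theorem uamoAlpha_two_mul_eq (k : ℤ) :
    uamoAlpha lam1 lam2 Phi theta beta0 beta1 (2 * k)
      = uamoAlpha lam1 lam2 Phi' theta beta0 beta1 (2 * k) := by
  by_cases hk : k = 0
  · simp [uamoAlpha, hk]
  · rw [uamoAlpha_two_mul hk, uamoAlpha_two_mul hk]

theorem norm_uamoAlpha_two_mul_le (hb0 : ‖beta0‖ ≤ 1) (k : ℤ) :
    ‖uamoAlpha lam1 lam2 Phi theta beta0 beta1 (2 * k)‖ ≤ 1 := by
  by_cases hk : k = 0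
  · simpa [uamoAlpha, hk] using hb0
  · rw [uamoAlpha_two_mul hk, Complex.norm_real, Real.norm_of_nonneg (Real.sqrt_nonneg _)]
    exact Real.sqrt_le_one.2 (by nlinarith [sq_nonneg lam1])

theorem uamoAlpha_two_mul_add_one {k : ℤ} (hk : k ≠ 0) :
    uamoAlpha lam1 lam2 Phi theta beta0 beta1 (2 * k + 1)
      = ((lam2 * Real.sin (2 * Real.pi * ((k + 1) * Phi + theta)) : ℝ) : ℂ) := by
  have h0 : 2 * k + 1 ≠ 0 := by omega
  have h1 : 2 * k + 1 ≠ 1 := by omega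
  have hdiv : (2 * k + 1 + 1) / 2 = k + 1 := by omega
  simp [uamoAlpha, h0, h1, hdiv]

theorem cmvRho_uamoAlpha_two_mul_add_one {k : ℤ} (hk : k ≠ 0) :
    cmvRho (uamoAlpha lam1 lam2 Phi theta beta0 beta1) (2 * k + 1)
      = √(1 - (lam2 * Real.sin (2 * Real.pi * ((k + 1) * Phi + theta))) ^ 2) := by
  rw [cmvRho, uamoAlpha_two_mul_add_one hk, Complex.norm_real, Real.norm_eq_abs, sq_abs]

theorem uamoAlpha_odd_block_le {Phi1 Phi2 : ℝ} (h0 : 0 ≤ lam2) (h1 : lam2 < 1) (k : ℤ) :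
    ‖uamoAlpha lam1 lam2 Phi1 theta beta0 beta1 (2 * k + 1)
        - uamoAlpha lam1 lam2 Phi2 theta beta0 beta1 (2 * k + 1)‖ ^ 2
      + (cmvRho (uamoAlpha lam1 lam2 Phi1 theta beta0 beta1) (2 * k + 1)
        - cmvRho (uamoAlpha lam1 lam2 Phi2 theta beta0 beta1) (2 * k + 1)) ^ 2
      ≤ (2 * Real.pi * lam2 * |Phi1 - Phi2|) ^ 2 * ((k : ℝ) + 1) ^ 2 := by
  by_cases hk : k = 0
  · have hα (Φ : ℝ) : uamoAlpha lam1 lam2 Φ theta beta0 beta1 (2 * k + 1) = beta1 := by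
      simp [uamoAlpha, hk]
    have : 0 ≤ (2 * Real.pi * lam2 * |Phi1 - Phi2|) ^ 2 * ((k : ℝ) + 1) ^ 2 := by positivity
    simpa [cmvRho, hα] using this
  rw [uamoAlpha_two_mul_add_one hk, uamoAlpha_two_mul_add_one hk,
    cmvRho_uamoAlpha_two_mul_add_one hk, cmvRho_uamoAlpha_two_mul_add_one hk,
    ← Complex.ofReal_sub, Complex.norm_real, Real.norm_eq_abs, sq_abs]
  refine (sq_sub_add_sq_sqrt_sub_le h0 h1 _ _).trans (le_of_eq ?_)
  rw [mul_pow, mul_pow, sq_abs]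
  ring

end UAMO

theorem stmt_12_general
    (lam1 lam2 : ℝ) (h1 : 0 ≤ lam1) (h12 : lam1 < lam2) (h2 : lam2 < 1)
    (Phi1 Phi2 theta : ℝ) (beta0 beta1 : ℂ) (hb0 : ‖beta0‖ < 1)
    (E1 E2 : l2Z →L[ℂ] l2Z)
    (hE1 : IsECMV (uamoAlpha lam1 lam2 Phi1 theta beta0 beta1) E1)
    (hE2 : IsECMV (uamoAlpha lam1 lam2 Phi2 theta beta0 beta1) E2)
    (t : ℕ) :
    ‖(E1 ^ t) (deltaVec 0) - (E2 ^ t) (deltaVec 0)‖ ≤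
      2 * Real.pi * lam2 * |Phi1 - Phi2| *
        ∑ s ∈ Finset.range t, ‖posX ((E2 ^ s) (deltaVec 0))‖ := by
  have hlam2 : 0 ≤ lam2 := h1.trans h12.le
  have hstep : ∀ s : ℕ, ‖E1 ((E2 ^ s) (deltaVec 0)) - E2 ((E2 ^ s) (deltaVec 0))‖
      ≤ 2 * Real.pi * lam2 * |Phi1 - Phi2| * ‖posX ((E2 ^ s) (deltaVec 0))‖ := fun s =>
    hE1.norm_apply_sub_apply_le hE2 uamoAlpha_two_mul_eq (norm_uamoAlpha_two_mul_le hb0.le)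
      (by positivity) (uamoAlpha_odd_block_le hlam2 h2)
      (inDomX_of_finite_support (hE2.finite_support_pow_apply (finite_support_deltaVec 0) s))
  calc _ ≤ ∑ s ∈ Finset.range t,
          ‖E1 ((E2 ^ s) (deltaVec 0)) - E2 ((E2 ^ s) (deltaVec 0))‖ :=
        norm_pow_apply_sub_pow_apply_le_sum E1 E2
          (fun x => (E1.norm_map_of_mem_unitary hE1.1 x).le) _ t
    _ ≤ _ := by rw [Finset.mul_sum]; exact Finset.sum_le_sum fun s _ => hstep s

/-- Fix `0 ≤ λ₁ < λ₂ < 1`.  For all `Φ₁, Φ₂, θ ∈ ℝ`, `β₀, β₁ ∈ 𝔻`, and every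
positive integer `t`, writing `E_j = E_{Φ_j,θ,β₀,β₁}`, one has
`‖E₁ᵗδ₀ - E₂ᵗδ₀‖ ≤ 2πλ₂|Φ₁ - Φ₂|·∑_{s=0}^{t-1} ‖X E₂ˢ δ₀‖`. -/
theorem stmt_12
    (lam1 lam2 : ℝ) (h1 : 0 ≤ lam1) (h12 : lam1 < lam2) (h2 : lam2 < 1)
    (Phi1 Phi2 theta : ℝ) (beta0 beta1 : ℂ) (hb0 : ‖beta0‖ < 1) (hb1 : ‖beta1‖ < 1)
    (E1 E2 : l2Z →L[ℂ] l2Z)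
    (hE1 : IsECMV (uamoAlpha lam1 lam2 Phi1 theta beta0 beta1) E1)
    (hE2 : IsECMV (uamoAlpha lam1 lam2 Phi2 theta beta0 beta1) E2)
    (t : ℕ) (ht : 0 < t) :
    ‖(E1 ^ t) (deltaVec 0) - (E2 ^ t) (deltaVec 0)‖ ≤
      2 * Real.pi * lam2 * |Phi1 - Phi2| *
        ∑ s ∈ Finset.range t, ‖posX ((E2 ^ s) (deltaVec 0))‖ :=
  stmt_12_general lam1 lam2 h1 h12 h2 Phi1 Phi2 theta beta0 beta1 hb0 E1 E2 hE1 hE2 t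

end
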